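/- arXiv:2412.10307 — 6 statements merged into one kernel-verified Lean document; each statement's English description precedes it below -/
import Mathlib

section
/- In any band (idempotent semigroup) S, for all elements a, b ∈ S and every element w belonging to the subsemigroup of S generated by {a, b}, one has (a*b)*w*(a*b) = a*b. -/
/-- Key band lemma: if `p*e = e`, `e*p = p`, `e*q = e`, `q*e = q` in a band, then `p*q = e`. -/
lemma band_key {S : Type*} [Semigroup S] (hband : ∀ x : S, x * x = x)
    (e p q : S) (h1 : p * e = e) (h2 : e * p = p) (h3 : e * q = e) (h4 : q * e = q) :
    p * q = e := by
  have idem : (q * p) * (q * p) = q * p := hband _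
  have A : p * q = e * (q * (p * q)) := by
    conv_lhs => rw [← h2, ← h3]
    simp only [mul_assoc]
  have B : p * q = e * ((q * p) * ((q * p) * e)) := by
    have : e * ((q * p) * ((q * p) * e)) = e * (q * (p * (q * (p * e)))) := by
      simp only [mul_assoc]
    rw [this, h1, h4]; exact A
  rw [B, ← mul_assoc (q*p) (q*p) e, idem, mul_assoc q p e, h1, h4, h3]

/-- In any band (idempotent semigroup) `S`, for all `a b : S` and every element `w`
of the subsemigroup of `S` generated by `{a, b}`, one has `(a*b)*w*(a*b) = a*b`. -/
theorem band_ab_sandwich {S : Type*} [Semigroup S] (hband : ∀ x : S, x * x = x)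
    (a b : S) (w : S) (hw : w ∈ Subsemigroup.closure ({a, b} : Set S)) :
    (a * b) * w * (a * b) = a * b := by
  induction hw using Subsemigroup.closure_induction with
  | mem x hx =>
    simp only [Set.mem_insert_iff, Set.mem_singleton_iff] at hx
    rcases hx with h | h
    · rw [h]
      have key : a * (a * b) = a * b := by rw [← mul_assoc, hband]
      calc (a*b)*a*(a*b) = (a*b)*(a*(a*b)) := by rw [mul_assoc]
        _ = (a*b)*(a*b) := by rw [key]
        _ = a*b := hband _
    · rw [h]
      calc (a*b)*b*(a*b) = (a*(b*b))*(a*b) := by rw [mul_assoc a b b]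
        _ = (a*b)*(a*b) := by rw [hband]
        _ = a*b := hband _
  | mul x y hxm hym hx hy =>
    have key := band_key hband (a*b) ((a*b)*x) (y*(a*b))
      hx
      (by rw [← mul_assoc, hband])
      (by rw [← mul_assoc]; exact hy)
      (by rw [mul_assoc, hband])
    simpa only [mul_assoc] using key
end

section
/- Let ~ denote AI-equivalence on nonempty lists over the two-letter alphabet {a, b}, i.e. the smallest equivalence relation on nonempty lists that is compatible with concatenation (u ~ u' and v ~ v' imply u ++ v ~ u' ++ v') and satisfies w ++ w ~ w for every nonempty list w. Then for every list r over {a, b} (possibly empty), [a, b] ++ r ++ [a, b] ~ [a, b]. -/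
/-- AI-equivalence on nonempty lists over an alphabet `α`: the smallest equivalence
relation on nonempty lists that is compatible with concatenation and satisfies
`w ++ w ~ w` for every nonempty list `w`. -/
inductive AIEquiv {α : Type*} : List α → List α → Prop
  | refl (u : List α) (hu : u ≠ []) : AIEquiv u u
  | symm {u v : List α} : AIEquiv u v → AIEquiv v u
  | trans {u v w : List α} : AIEquiv u v → AIEquiv v w → AIEquiv u w
  | append {u u' v v' : List α} : AIEquiv u u' → AIEquiv v v' →
      AIEquiv (u ++ v) (u' ++ v')
  | idem (w : List α) (hw : w ≠ []) : AIEquiv (w ++ w) w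

/-- `abb ~ ab` -/
lemma aiEquiv_abb : AIEquiv ([false, true, true] : List Bool) [false, true] := by
  have h := AIEquiv.append (AIEquiv.refl ([false] : List Bool) (by simp))
    (AIEquiv.idem ([true] : List Bool) (by simp))
  simpa using h

/-- `abaa ~ aba` -/
lemma aiEquiv_abaa : AIEquiv ([false, true, false, false] : List Bool) [false, true, false] := by
  have h := AIEquiv.append (AIEquiv.refl ([false, true] : List Bool) (by simp))
    (AIEquiv.idem ([false] : List Bool) (by simp))
  simpa using h

/-- `abab ~ ab` -/
lemma aiEquiv_abab : AIEquiv ([false, true, false, true] : List Bool) [false, true] := by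
  have h := AIEquiv.idem ([false, true] : List Bool) (by simp)
  simpa using h

/-- `abaab ~ ab` -/
lemma aiEquiv_abaab : AIEquiv ([false, true, false, false, true] : List Bool) [false, true] := by
  have h := AIEquiv.append (AIEquiv.append
    (AIEquiv.refl ([false, true] : List Bool) (by simp))
    (AIEquiv.idem ([false] : List Bool) (by simp)))
    (AIEquiv.refl ([true] : List Bool) (by simp))
  exact AIEquiv.trans (by simpa using h) aiEquiv_abab

/-- Invariant: `ab ++ r` is equivalent to `ab` or `aba`. -/
lemma aiEquiv_ab_prefix (r : List Bool) :
    AIEquiv (([false, true] ++ r) : List Bool) [false, true] ∨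
    AIEquiv (([false, true] ++ r) : List Bool) [false, true, false] := by
  induction r using List.reverseRecOn with
  | nil => exact Or.inl (by simpa using AIEquiv.refl ([false, true] : List Bool) (by simp))
  | append_singleton r' c ih =>
    rw [← List.append_assoc]
    rcases ih with h | h <;> cases c
    · -- ab ++ [false] = aba
      exact Or.inr (by simpa using AIEquiv.append h (AIEquiv.refl [false] (by simp)))
    · -- ab ++ [true] = abb ~ ab
      exact Or.inl (AIEquiv.trans
        (by simpa using AIEquiv.append h (AIEquiv.refl [true] (by simp))) aiEquiv_abb)
    · -- aba ++ [false] = abaa ~ aba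
      exact Or.inr (AIEquiv.trans
        (by simpa using AIEquiv.append h (AIEquiv.refl [false] (by simp))) aiEquiv_abaa)
    · -- aba ++ [true] = abab ~ ab
      exact Or.inl (AIEquiv.trans
        (by simpa using AIEquiv.append h (AIEquiv.refl [true] (by simp))) aiEquiv_abab)

/-- Over the two-letter alphabet `{a, b}` (encoded as `Bool` with `a := false`,
`b := true`), for every list `r`, `[a, b] ++ r ++ [a, b]` is AI-equivalent to `[a, b]`. -/
theorem aiEquiv_ab_sandwich (r : List Bool) :
    AIEquiv (([false, true] ++ r ++ [false, true]) : List Bool) [false, true] := by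
  rcases aiEquiv_ab_prefix r with h | h
  · exact AIEquiv.trans (AIEquiv.append h (AIEquiv.refl [false, true] (by simp)))
      (AIEquiv.idem [false, true] (by simp))
  · exact AIEquiv.trans (AIEquiv.append h (AIEquiv.refl [false, true] (by simp)))
      aiEquiv_abaab
end

section
/- Let S be a band (idempotent semigroup), let a, b ∈ S, and let g : Option Bool → S be any function with g (some false) = a and g (some true) = b. (i) If g none = a*b, then for every list l of elements of Option Bool, (a*b) * p * (a*b) = a*b, where p is the product in S of the list (l.map g) (interpreting the product of the empty list so that the whole expression reads (a*b)*(a*b) when l is empty). (ii) If instead g none = b*a, then (b*a) * p * (b*a) = b*a for every such list l. -/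
/-!
Put `e = a * b`. In a band `a * e = e`, `b * b = b` and `e * e = e`, so a left factor `p`
with `p * e = e` and `p * b * e = e` keeps both properties when it is multiplied on the right
by `a` or by `b`. Starting from `p = e`, the product `e * w` of `e` with any word `w` in
`a`, `b` and `e` therefore satisfies `e * w * e = e`.
-/

section Band

variable {S : Type*} [Semigroup S] {a b p : S}

def LeftAbsorbed (a b p : S) : Prop :=
  p * (a * b) = a * b ∧ p * b * (a * b) = a * b

theorem LeftAbsorbed.mul_fst (hband : ∀ x : S, x * x = x) (h : LeftAbsorbed a b p) :
    LeftAbsorbed a b (p * a) := by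
  constructor
  · rw [mul_assoc, IsIdempotentElem.mul_self_mul (hband a), h.1]
  · rw [mul_assoc p, IsIdempotentElem.mul_mul_self (hband (a * b)), h.1]

theorem LeftAbsorbed.mul_snd (hband : ∀ x : S, x * x = x) (h : LeftAbsorbed a b p) :
    LeftAbsorbed a b (p * b) := by
  rw [LeftAbsorbed, IsIdempotentElem.mul_mul_self (hband b)]
  exact ⟨h.2, h.2⟩

theorem LeftAbsorbed.mul_mul (hband : ∀ x : S, x * x = x) (h : LeftAbsorbed a b p) :
    LeftAbsorbed a b (p * (a * b)) :=
  mul_assoc p a b ▸ (h.mul_fst hband).mul_snd hband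

theorem LeftAbsorbed.self (hband : ∀ x : S, x * x = x) : LeftAbsorbed a b (a * b) := by
  refine ⟨hband _, ?_⟩
  rw [mul_assoc a, hband b, hband]

theorem LeftAbsorbed.foldl_mul (hband : ∀ x : S, x * x = x) (h : LeftAbsorbed a b p)
    (L : List S) (hL : ∀ c ∈ L, c = a ∨ c = b ∨ c = a * b) :
    LeftAbsorbed a b (L.foldl (· * ·) p) := by
  induction L generalizing p with
  | nil => exact h
  | cons c L ih =>
    refine ih ?_ fun d hd => hL d (List.mem_cons_of_mem c hd)
    rcases hL c List.mem_cons_self with rfl | rfl | rfl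
    exacts [h.mul_fst hband, h.mul_snd hband, h.mul_mul hband]

theorem foldl_mul_mul_self_eq (hband : ∀ x : S, x * x = x) (L : List S)
    (hL : ∀ c ∈ L, c = a ∨ c = b ∨ c = a * b) :
    L.foldl (· * ·) (a * b) * (a * b) = a * b :=
  ((LeftAbsorbed.self hband).foldl_mul hband L hL).1

end Band

/-- Let `S` be a band (idempotent semigroup), `a b : S`, and `g : Option Bool → S`
with `g (some false) = a` and `g (some true) = b`.
(i) If `g none = a*b`, then for every list `l` over `Option Bool`,
`(a*b) * p * (a*b) = a*b`, where `p` is the product of `l.map g` (the product is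
formed by left-folding starting from `a*b`, so the whole expression reads
`(a*b)*(a*b)` when `l` is empty).
(ii) If instead `g none = b*a`, then `(b*a) * p * (b*a) = b*a` for every such `l`. -/
theorem band_simple_word_generalizes {S : Type*} [Semigroup S]
    (hband : ∀ x : S, x * x = x) (a b : S) (g : Option Bool → S)
    (ha : g (some false) = a) (hb : g (some true) = b) :
    (g none = a * b →
      ∀ l : List (Option Bool),
        ((l.map g).foldl (· * ·) (a * b)) * (a * b) = a * b) ∧
    (g none = b * a →
      ∀ l : List (Option Bool),
        ((l.map g).foldl (· * ·) (b * a)) * (b * a) = b * a) := by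
  have hletters : ∀ (l : List (Option Bool)), ∀ c ∈ l.map g, c = a ∨ c = b ∨ c = g none := by
    simp only [List.mem_map]
    rintro l _ ⟨(_ | _ | _), -, rfl⟩ <;> simp [ha, hb]
  refine ⟨fun hn l => ?_, fun hn l => ?_⟩
  · exact foldl_mul_mul_self_eq hband _ fun c hc => hn ▸ hletters l c hc
  · refine foldl_mul_mul_self_eq hband _ fun c hc => ?_
    rcases hletters l c hc with h | h | h
    exacts [Or.inr (Or.inl h), Or.inl h, Or.inr (Or.inr (h.trans hn))]
end

section
/- Let FB denote the free band on Bool, i.e. the quotient of the free semigroup on Bool by the smallest multiplicative congruence identifying w*w with w for every element w, and let a, b ∈ FB be the images of false and true respectively. Then for every element s ∈ FB: a*s ≠ b*a, s*a ≠ a*b, b*s ≠ a*b, and s*b ≠ b*a. -/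
/-- The smallest multiplicative congruence on the free semigroup on `α`
identifying `w * w` with `w` for every element `w`. -/
def bandCon (α : Type*) : Con (FreeSemigroup α) :=
  conGen fun u v => u = v * v

/-- The free band on `α`: the quotient of the free semigroup on `α` by the
smallest multiplicative congruence identifying `w * w` with `w`. -/
abbrev FreeBand (α : Type*) := (bandCon α).Quotient

/-
Idempotency `w * w = w` changes neither the first nor the last letter of a word, so both are
well defined on the free band, and multiplication keeps the first letter of the left factor and
the last letter of the right one. Comparing first letters refutes `a * s = b * a` and
`b * s = a * b`; comparing last letters refutes `s * a = a * b` and `s * b = b * a`.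
-/

namespace FreeSemigroup

variable {α : Type*}

def last (x : FreeSemigroup α) : α :=
  x.tail.getLast?.getD x.head

@[simp]
theorem last_of (a : α) : (of a).last = a :=
  rfl

@[simp]
theorem last_mul (x y : FreeSemigroup α) : (x * y).last = y.last := by
  simp [last, tail_mul, List.getLast?_append, List.getLast?_cons]

def headCon (α : Type*) : Con (FreeSemigroup α) where
  toSetoid := Setoid.ker head
  mul' h _ := h

def lastCon (α : Type*) : Con (FreeSemigroup α) where
  toSetoid := Setoid.ker last
  mul' _ h := (last_mul _ _).trans (h.trans (last_mul _ _).symm)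

end FreeSemigroup

namespace FreeBand

open FreeSemigroup

variable {α : Type*}

theorem bandCon_le_headCon : bandCon α ≤ headCon α :=
  Con.conGen_le.2 <| by rintro _ v rfl; rfl

theorem bandCon_le_lastCon : bandCon α ≤ lastCon α :=
  Con.conGen_le.2 <| by rintro _ v rfl; exact last_mul v v

def head (x : FreeBand α) : α :=
  Con.liftOn x FreeSemigroup.head fun _ _ h => bandCon_le_headCon h

def last (x : FreeBand α) : α :=
  Con.liftOn x FreeSemigroup.last fun _ _ h => bandCon_le_lastCon h

@[simp]
theorem head_coe (x : FreeSemigroup α) : head (x : FreeBand α) = x.head :=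
  rfl

@[simp]
theorem last_coe (x : FreeSemigroup α) : last (x : FreeBand α) = x.last :=
  rfl

@[simp]
theorem head_mul (x y : FreeBand α) : head (x * y) = head x :=
  Con.induction_on₂ x y fun _ _ => rfl

@[simp]
theorem last_mul (x y : FreeBand α) : last (x * y) = last y :=
  Con.induction_on₂ x y fun x y => FreeSemigroup.last_mul x y

end FreeBand

/-- In the free band on `Bool`, with `a`, `b` the images of `false`, `true`,
for every element `s`: `a*s ≠ b*a`, `s*a ≠ a*b`, `b*s ≠ a*b`, and `s*b ≠ b*a`. -/
theorem freeBand_no_two_letter_generalizer (s : FreeBand Bool) :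
    letI a : FreeBand Bool := (FreeSemigroup.of false : FreeSemigroup Bool)
    letI b : FreeBand Bool := (FreeSemigroup.of true : FreeSemigroup Bool)
    a * s ≠ b * a ∧ s * a ≠ a * b ∧ b * s ≠ a * b ∧ s * b ≠ b * a := by
  refine ⟨fun h => ?_, fun h => ?_, fun h => ?_, fun h => ?_⟩
  · simpa using congrArg FreeBand.head h
  · simpa using congrArg FreeBand.last h
  · simpa using congrArg FreeBand.head h
  · simpa using congrArg FreeBand.last h
end

section
/- The free band on a finite type is finite. Equivalently, every band (idempotent semigroup) that is generated, as a semigroup, by a finite subset is finite. -/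
namespace Band

variable {M : Type*} [Semigroup M]

def Absorbs (u a : M) : Prop := u * a * u = u

theorem Absorbs.mul_left (idem : ∀ a : M, a * a = a) {x a : M} (h : Absorbs x a) (b : M) :
    Absorbs (b * x) a :=
  calc b * x * a * (b * x) = b * x * a * (b * (x * a * x)) := by rw [h]
    _ = ((b * x * a) * (b * x * a)) * x := by simp only [mul_assoc]
    _ = b * (x * a * x) := by rw [idem]; simp only [mul_assoc]
    _ = b * x := by rw [h]

theorem Absorbs.mul (idem : ∀ a : M, a * a = a) {u a b : M} (ha : Absorbs u a)
    (hb : Absorbs u b) : Absorbs u (a * b) :=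
  calc u * (a * b) * u = (u * b * u) * a * b * (u * a * u) := by
        rw [ha, hb]; simp only [mul_assoc]
    _ = u * ((b * u * a) * (b * u * a)) * u := by simp only [mul_assoc]
    _ = u * b * (u * a * u) := by rw [idem]; simp only [mul_assoc]
    _ = u := by rw [ha, hb]

theorem mul_eq_of_absorbs {u v w : M} (hu : u * w = w) (hv : w * v = w)
    (huv : Absorbs u v) (hvw : Absorbs v w) : u * v = w :=
  calc u * v = u * (v * w * v) := by rw [hvw]
    _ = u * v * (w * v) := by simp only [mul_assoc]
    _ = u * v * (u * w) := by rw [hv, hu]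
    _ = u * v * u * w := by simp only [mul_assoc]
    _ = w := by rw [huv, hu]

end Band

namespace List

variable {α : Type*} [DecidableEq α]

theorem exists_eq_append_cons_suffix_toFinset_eq_erase {l : List α} (hl : l ≠ []) :
    ∃ r τ q, l = r ++ τ :: q ∧ q.toFinset = l.toFinset.erase τ := by
  induction l with
  | nil => exact absurd rfl hl
  | cons b l ih =>
    by_cases hb : b ∈ l
    · obtain ⟨r, τ, q, rfl, hq⟩ := ih (ne_nil_of_mem hb)
      refine ⟨b :: r, τ, q, rfl, ?_⟩
      rw [hq, toFinset_cons, Finset.insert_eq_of_mem (mem_toFinset.2 hb)]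
    · exact ⟨[], b, l, rfl, by rw [toFinset_cons, Finset.erase_insert (by simpa using hb)]⟩

theorem exists_eq_append_cons_prefix_toFinset_eq_erase {l : List α} (hl : l ≠ []) :
    ∃ p σ r, l = p ++ σ :: r ∧ p.toFinset = l.toFinset.erase σ := by
  obtain ⟨r, σ, p, hrev, hp⟩ :=
    exists_eq_append_cons_suffix_toFinset_eq_erase (reverse_ne_nil_iff.2 hl)
  refine ⟨p.reverse, σ, r.reverse, ?_, by rwa [toFinset_reverse, ← toFinset_reverse (l := l)]⟩
  simpa using congrArg reverse hrev

end List

section BandMonoid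

variable {N : Type*} [Monoid N] {α : Type*} (f : α → N)

theorem absorbs_prod_map_of_mem (idem : ∀ a : N, a * a = a) {l : List α} {a : α}
    (ha : a ∈ l) : Band.Absorbs (l.map f).prod (f a) := by
  induction l with
  | nil => simp at ha
  | cons b l ih =>
    rw [List.map_cons, List.prod_cons]
    rcases List.mem_cons.1 ha with rfl | ha
    · calc f a * (l.map f).prod * f a * (f a * (l.map f).prod)
          = f a * (l.map f).prod * (f a * f a) * (l.map f).prod := by simp only [mul_assoc]
        _ = (f a * (l.map f).prod) * (f a * (l.map f).prod) := by
            rw [idem]; simp only [mul_assoc]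
        _ = f a * (l.map f).prod := idem _
    · exact (ih ha).mul_left idem (f b)

theorem absorbs_prod_map_of_subset (idem : ∀ a : N, a * a = a) {l l' : List α}
    (h : l' ⊆ l) : Band.Absorbs (l.map f).prod (l'.map f).prod := by
  induction l' with
  | nil => simp [Band.Absorbs, idem]
  | cons a l' ih =>
    obtain ⟨ha, hl'⟩ := List.cons_subset.1 h
    rw [List.map_cons, List.prod_cons]
    exact (absorbs_prod_map_of_mem f idem ha).mul idem (ih hl')

theorem exists_prod_map_eq_mul_mul [DecidableEq α] (idem : ∀ a : N, a * a = a) {l : List α}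
    (hl : l ≠ []) : ∃ (p : List α) (σ : α) (q : List α) (τ : α),
      σ ∈ l.toFinset ∧ τ ∈ l.toFinset ∧
      p.toFinset = l.toFinset.erase σ ∧ q.toFinset = l.toFinset.erase τ ∧
      (l.map f).prod = (p.map f).prod * f σ * (f τ * (q.map f).prod) := by
  obtain ⟨p, σ, r, rfl, hp⟩ := List.exists_eq_append_cons_prefix_toFinset_eq_erase hl
  obtain ⟨r', τ, q, hl', hq⟩ := List.exists_eq_append_cons_suffix_toFinset_eq_erase hl
  set l := p ++ σ :: r
  have hσ : σ ∈ l.toFinset := by simp [l]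
  have hτ : τ ∈ l.toFinset := by simp [hl']
  have hpσ : (p ++ [σ]).toFinset = l.toFinset := by
    rw [List.toFinset_append, hp]
    simp [Finset.insert_erase hσ]
  have hτq : (τ :: q).toFinset = l.toFinset := by
    rw [List.toFinset_cons, hq, Finset.insert_erase hτ]
  have subset_of_toFinset_eq {l₁ l₂ : List α} (h : l₁.toFinset = l₂.toFinset) : l₁ ⊆ l₂ :=
    fun x hx => List.mem_toFinset.1 (h ▸ List.mem_toFinset.2 hx)
  refine ⟨p, σ, q, τ, hσ, hτ, hp, hq, (Band.mul_eq_of_absorbs ?_ ?_ ?_ ?_).symm⟩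
  · calc (p.map f).prod * f σ * (l.map f).prod
        = ((p.map f).prod * f σ) * ((p.map f).prod * f σ) * (r.map f).prod := by
          simp [l, mul_assoc]
      _ = (l.map f).prod := by rw [idem]; simp [l, mul_assoc]
  · calc (l.map f).prod * (f τ * (q.map f).prod)
        = (r'.map f).prod * ((f τ * (q.map f).prod) * (f τ * (q.map f).prod)) := by
          simp [hl', mul_assoc]
      _ = (l.map f).prod := by rw [idem]; simp [hl']
  · simpa using absorbs_prod_map_of_subset f idem (subset_of_toFinset_eq (hτq.trans hpσ.symm))
  · simpa using absorbs_prod_map_of_subset f idem (subset_of_toFinset_eq hτq.symm)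

theorem finite_setOf_prod_map_of_toFinset_eq [DecidableEq α] (idem : ∀ a : N, a * a = a)
    (C : Finset α) : {x | ∃ l : List α, l.toFinset = C ∧ (l.map f).prod = x}.Finite := by
  induction C using Finset.strongInduction with
  | H C ih =>
    have products_finite (σ τ : α) (hσ : σ ∈ C) (hτ : τ ∈ C) :=
      ((ih _ (Finset.erase_ssubset hσ)).prod (ih _ (Finset.erase_ssubset hτ))).image
        fun y => y.1 * f σ * (f τ * y.2)
    refine ((Set.finite_singleton 1).union (C.finite_toSet.biUnion fun σ hσ =>
      C.finite_toSet.biUnion fun τ hτ => products_finite σ τ hσ hτ)).subset ?_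
    rintro _ ⟨l, rfl, rfl⟩
    rcases eq_or_ne l [] with rfl | hl
    · exact Or.inl rfl
    obtain ⟨p, σ, q, τ, hσ, hτ, hp, hq, h⟩ := exists_prod_map_eq_mul_mul f idem hl
    exact Or.inr (Set.mem_biUnion hσ (Set.mem_biUnion hτ
      ⟨(_, _), ⟨⟨p, hp, rfl⟩, ⟨q, hq, rfl⟩⟩, h.symm⟩))

theorem finite_range_prod_map [Finite α] (idem : ∀ a : N, a * a = a) :
    (Set.range fun l : List α => (l.map f).prod).Finite := by
  classical
  refine (Set.finite_iUnion fun C => finite_setOf_prod_map_of_toFinset_eq f idem C).subset ?_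
  rintro _ ⟨l, rfl⟩
  exact Set.mem_iUnion.2 ⟨l.toFinset, l, rfl, rfl⟩

end BandMonoid

theorem finite_of_closure_range_eq_top {S : Type*} [Semigroup S] (idem : ∀ a : S, a * a = a)
    {ι : Type*} [Finite ι] (g : ι → S) (hg : Subsemigroup.closure (Set.range g) = ⊤) :
    Finite S := by
  have idem' : ∀ a : WithOne S, a * a = a := by
    intro a
    induction a using WithOne.recOneCoe with
    | one => exact one_mul 1
    | coe a => rw [← WithOne.coe_mul, idem]
  have exists_word (x : S) : ∃ l : List ι, (l.map fun i => (g i : WithOne S)).prod = x := by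
    have hx : x ∈ Subsemigroup.closure (Set.range g) := hg ▸ Subsemigroup.mem_top x
    induction hx using Subsemigroup.closure_induction with
    | mem _ hx =>
      obtain ⟨i, rfl⟩ := hx
      exact ⟨[i], by simp⟩
    | mul x y _ _ hx hy =>
      obtain ⟨l, hl⟩ := hx
      obtain ⟨l', hl'⟩ := hy
      exact ⟨l ++ l', by simp [hl, hl']⟩
  have := (finite_range_prod_map (fun i => (g i : WithOne S)) idem').to_subtype
  exact Finite.of_injective (fun x => (⟨(x : WithOne S), exists_word x⟩ : Set.range _))
    fun x y h => WithOne.coe_injective (congrArg Subtype.val h)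

namespace FreeBand

variable {α : Type*}

theorem mul_self (x : FreeBand α) : x * x = x :=
  Con.induction_on x fun _ => (bandCon α).eq.2 (ConGen.Rel.of _ _ rfl)

theorem closure_range_of :
    Subsemigroup.closure
      (Set.range fun a : α => ((FreeSemigroup.of a : FreeSemigroup α) : FreeBand α)) = ⊤ := by
  refine (Subsemigroup.eq_top_iff' _).2 fun x => Con.induction_on x fun w => ?_
  induction w using FreeSemigroup.recOnMul with
  | ih1 a => exact Subsemigroup.subset_closure ⟨a, rfl⟩
  | ih2 a w ha hw => exact Subsemigroup.mul_mem _ ha hw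

end FreeBand

/-- Green–Rees theorem: the free band on a finite type is finite; equivalently,
every band (idempotent semigroup) generated, as a semigroup, by a finite subset
is finite. -/
theorem green_rees :
    (∀ (α : Type) [Fintype α], Finite (FreeBand α)) ∧
    (∀ (S : Type) [Semigroup S], (∀ x : S, x * x = x) →
      ∀ s : Finset S, Subsemigroup.closure (s : Set S) = ⊤ → Finite S) :=
  ⟨fun _ _ => finite_of_closure_range_eq_top FreeBand.mul_self _ FreeBand.closure_range_of,
    fun S _ idem s hs =>
      finite_of_closure_range_eq_top idem ((↑) : s → S) (by rwa [Subtype.range_coe])⟩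
end

section
/- There exists an infinite square-free word over a three-letter alphabet: there is a function f : ℕ → Fin 3 such that for every starting index i and every length n ≥ 1, it is not the case that f(i + k) = f(i + n + k) for all k < n (i.e. no factor of f is of the form u u with u nonempty). -/
/-- The Thue–Morse sequence. -/
def tm : ℕ → Bool
  | 0 => false
  | n + 1 => xor (tm ((n + 1) / 2)) ((n + 1) % 2 == 1)
  decreasing_by exact Nat.div_lt_self (Nat.succ_pos n) one_lt_two

lemma tm_succ (n : ℕ) : tm (n + 1) = xor (tm ((n + 1) / 2)) ((n + 1) % 2 == 1) := by
  rw [tm]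

lemma tm_two_mul (j : ℕ) : tm (2 * j) = tm j := by
  rcases j with _ | m
  · rfl
  · have h1 : 2 * (m + 1) = (2 * m + 1) + 1 := by omega
    rw [h1, tm_succ]
    have h2 : (2 * m + 1 + 1) / 2 = m + 1 := by omega
    have h3 : (2 * m + 1 + 1) % 2 = 0 := by omega
    simp [h2, h3]

lemma tm_two_mul_add_one (j : ℕ) : tm (2 * j + 1) = !(tm j) := by
  rw [tm_succ]
  have h2 : (2 * j + 1) / 2 = j := by omega
  have h3 : (2 * j + 1) % 2 = 1 := by omega
  simp [h2, h3]

lemma tm_pair_ne (j : ℕ) : tm (2 * j) ≠ tm (2 * j + 1) := by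
  rw [tm_two_mul, tm_two_mul_add_one]
  cases tm j <;> simp

/-- Thue–Morse is overlap-free: no factor of the form `a u a u a`. -/
lemma tm_no_overlap : ∀ n, 1 ≤ n → ∀ i, ¬ (∀ k ≤ n, tm (i + k) = tm (i + n + k)) := by
  intro n
  induction n using Nat.strong_induction_on with
  | _ n IH =>
    intro hn i h
    rcases Nat.even_or_odd n with ⟨m, hm⟩ | ⟨m, hm⟩
    · -- n = 2m even, m ≥ 1: reduce to an overlap of period m
      have hm1 : 1 ≤ m := by omega
      rcases Nat.even_or_odd i with ⟨a, ha⟩ | ⟨a, ha⟩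
      · refine IH m (by omega) hm1 a ?_
        intro k hk
        have hk2 := h (2 * k) (by omega)
        have e1 : i + 2 * k = 2 * (a + k) := by omega
        have e2 : i + n + 2 * k = 2 * (a + m + k) := by omega
        rw [e1, e2, tm_two_mul, tm_two_mul] at hk2
        exact hk2
      · refine IH m (by omega) hm1 a ?_
        intro k hk
        have hk2 := h (2 * k) (by omega)
        have e1 : i + 2 * k = 2 * (a + k) + 1 := by omega
        have e2 : i + n + 2 * k = 2 * (a + m + k) + 1 := by omega
        rw [e1, e2, tm_two_mul_add_one, tm_two_mul_add_one] at hk2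
        simpa using hk2
    · -- n = 2m+1 odd: tm alternates on [i, i+n], contradicting tm (i+n) = tm i
      have alt : ∀ k, k < n → tm (i + k) ≠ tm (i + k + 1) := by
        intro k hk heq
        rcases Nat.even_or_odd (i + k) with ⟨j, hj⟩ | ⟨j, hj⟩
        · have e1 : i + k = 2 * j := by omega
          rw [e1] at heq
          exact tm_pair_ne j heq
        · -- i + k odd, so i + n + k is even
          have h1 := h k (by omega)
          have h2 := h (k + 1) (by omega)
          have hj2 : i + n + k = 2 * (j + m + 1) := by omega
          have hne := tm_pair_ne (j + m + 1)
          rw [← hj2] at hne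
          have h2' : tm (i + k + 1) = tm (i + n + k + 1) := h2
          rw [h1] at heq
          rw [h2'] at heq
          exact hne heq
      -- alternation: tm (i + k) = xor (tm i) (k % 2 == 1)
      have alt2 : ∀ k, k ≤ n → tm (i + k) = xor (tm i) (k % 2 == 1) := by
        intro k
        induction k with
        | zero => intro _; simp
        | succ k ih =>
          intro hk
          have h1 := ih (by omega)
          have h2 := alt k (by omega)
          rw [h1] at h2
          show tm (i + k + 1) = (tm i ^^ ((k + 1) % 2 == 1))
          rcases Nat.even_or_odd k with ⟨b, hb⟩ | ⟨b, hb⟩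
          · have e6 : k % 2 = 0 := by omega
            have e7 : (k + 1) % 2 = 1 := by omega
            rw [e6] at h2
            rw [e7]
            revert h2
            cases tm i <;> cases tm (i + k + 1) <;> simp
          · have e6 : k % 2 = 1 := by omega
            have e7 : (k + 1) % 2 = 0 := by omega
            rw [e6] at h2
            rw [e7]
            revert h2
            cases tm i <;> cases tm (i + k + 1) <;> simp
      have hA := alt2 n le_rfl
      have e6 : n % 2 = 1 := by omega
      rw [e6] at hA
      have h0 := h 0 (by omega)
      simp at h0
      rw [h0] at hA
      revert hA
      cases tm (i + n) <;> simp

/-- Encoding of the first difference of Thue–Morse into `Fin 3`. -/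
def g (a b : Bool) : Fin 3 := if a = b then 1 else if b then 2 else 0

lemma g_eq (a b c d : Bool) : g a b = g c d ↔ ((a = b ∧ c = d) ∨ (a = c ∧ b = d)) := by
  revert a b c d; decide

/-- Thue's theorem: there exists an infinite square-free word over a three-letter
alphabet, i.e. a function `f : ℕ → Fin 3` such that no factor of `f` is a square
`u u` with `u` nonempty. -/
theorem exists_infinite_squarefree_word :
    ∃ f : ℕ → Fin 3, ∀ (i n : ℕ), 1 ≤ n →
      ¬ (∀ k < n, f (i + k) = f (i + n + k)) := by
  refine ⟨fun n => g (tm n) (tm (n + 1)), ?_⟩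
  intro i n hn hyp
  by_cases hE : tm i = tm (i + n)
  · -- constant difference case: get an overlap in tm
    have claim : ∀ k, k ≤ n → tm (i + k) = tm (i + n + k) := by
      intro k
      induction k with
      | zero => intro _; simpa using hE
      | succ k ih =>
        intro hk
        have h1 := ih (by omega)
        have hd := (g_eq _ _ _ _).mp (hyp k (by omega))
        rcases hd with ⟨p1, p2⟩ | ⟨p1, p2⟩
        · show tm (i + k + 1) = tm (i + n + k + 1)
          rw [← p1, ← p2]; exact h1
        · exact p2
    exact tm_no_overlap n hn i claim
  · -- opposite values: tm is constant on both blocks, contradiction at shared point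
    have claim : ∀ k, k ≤ n → tm (i + k) = tm i ∧ tm (i + n + k) = tm (i + n) := by
      intro k
      induction k with
      | zero => intro _; simp
      | succ k ih =>
        intro hk
        obtain ⟨h1, h2⟩ := ih (by omega)
        have hd := (g_eq _ _ _ _).mp (hyp k (by omega))
        rcases hd with ⟨p1, p2⟩ | ⟨p1, p2⟩
        · constructor
          · show tm (i + k + 1) = tm i
            rw [← p1]; exact h1
          · show tm (i + n + k + 1) = tm (i + n)
            rw [← p2]; exact h2
        · exfalso
          rw [h1, h2] at p1
          exact hE p1
    exact hE ((claim n le_rfl).1).symm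
end
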